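/- arXiv:2108.06452 — 2 statements merged into one kernel-verified Lean document; each statement's English description precedes it below -/
import Mathlib

section
/- Let X be a measurable space, n ≥ 1, K ≥ 1, let s : Fin n → X → ℝ be measurable functions with values in [0,1], let α : Fin n → ℝ be a probability vector, and define f x = ∑ i, α i * s i x and, for ω : Fin K → Fin n, g_ω x = (1/K) * ∑ j, s (ω j) x. Let S be any probability measure on X × ({0,1} with the discrete σ-algebra), let τ ∈ (0,1), and for F : X → ℝ define the margin m_F(x,y) = (y − τ) * (F x − τ). Then for every θ > 0: ∫ S{(x,y) : m_{g_ω}(x,y) ≤ θ/2} dμ(ω) ≤ S{(x,y) : m_f(x,y) ≤ θ} + exp(−K θ² / 2), where μ is the K-fold product of the probability mass function α on Fin n. -/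
/-!
By Tonelli, the left-hand side equals `∫ μ {ω | margin (g ω) p ≤ θ / 2} dS(p)`. Where `f` has
margin at most `θ` we bound the integrand by `1`. Where `f` has margin `> θ` at `p = (x, y)`,
put `c = y - τ`: the margin of `g ω` can only drop to `θ / 2` if the sum of the `K` i.i.d.
terms `-c * s (ω j) x`, which lie in an interval of length `|c| ≤ 1` and have mean `-c * f x`,
exceeds its expectation by `K θ / 2`. Hoeffding's inequality bounds the probability of this
by `exp (-2 (K θ / 2)² / (K c²)) ≤ exp (-K θ² / 2)`.
-/

open MeasureTheory ProbabilityTheory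

section WeightedDirac

variable {ι : Type*} [Fintype ι] [MeasurableSpace ι] {α : ι → ℝ}

lemma isProbabilityMeasure_sum_smul_dirac (hα0 : ∀ i, 0 ≤ α i) (hα1 : ∑ i, α i = 1) :
    IsProbabilityMeasure (∑ i, ENNReal.ofReal (α i) • Measure.dirac i) := by
  constructor
  simp [← ENNReal.ofReal_sum_of_nonneg fun i _ => hα0 i, hα1]

lemma integral_sum_smul_dirac [MeasurableSingletonClass ι] (hα0 : ∀ i, 0 ≤ α i) (h : ι → ℝ) :
    ∫ i, h i ∂(∑ i, ENNReal.ofReal (α i) • Measure.dirac i) = ∑ i, α i * h i := by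
  rw [integral_finsetSum_measure fun i _ => Integrable.of_finite.smul_measure ENNReal.ofReal_ne_top]
  simp [integral_smul_measure, ENNReal.toReal_ofReal (hα0 _)]

end WeightedDirac

lemma measureReal_pi_sum_sub_integral_ge_le {ι E : Type*} [Fintype ι] [MeasurableSpace E]
    (ν : Measure E) [IsProbabilityMeasure ν] {h : E → ℝ} (hh : Measurable h) {a b : ℝ}
    (hab : ∀ x, h x ∈ Set.Icc a b) {ε : ℝ} (hε : 0 ≤ ε) :
    (Measure.pi fun _ : ι => ν).real {ω | ε ≤ ∑ j, (h (ω j) - ∫ x, h x ∂ν)} ≤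
      Real.exp (-2 * ε ^ 2 / (Fintype.card ι * (b - a) ^ 2)) := by
  have hindep : iIndepFun (fun j (ω : ι → E) => h (ω j) - ∫ x, h x ∂ν)
      (Measure.pi fun _ : ι => ν) :=
    iIndepFun_pi (X := fun _ x => h x - ∫ x, h x ∂ν) fun _ => (hh.sub_const _).aemeasurable
  have hsubG (j : ι) : HasSubgaussianMGF (fun ω : ι → E => h (ω j) - ∫ x, h x ∂ν)
      ((‖b - a‖₊ / 2) ^ 2) (Measure.pi fun _ : ι => ν) := by
    have := hasSubgaussianMGF_of_mem_Icc (μ := Measure.pi fun _ : ι => ν)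
      (X := fun ω => h (ω j))
      (hh.comp (measurable_pi_apply j)).aemeasurable (ae_of_all _ fun ω => hab (ω j))
    rwa [integral_comp_eval hh.aestronglyMeasurable] at this
  refine (HasSubgaussianMGF.measure_sum_ge_le_of_iIndepFun hindep
    (s := Finset.univ) (fun j _ => hsubG j) hε).trans_eq ?_
  simp only [Finset.sum_const, Finset.card_univ, nsmul_eq_mul]
  push_cast
  simp only [div_pow, Real.norm_eq_abs, sq_abs]
  rw [show 2 * ((Fintype.card ι : ℝ) * ((b - a) ^ 2 / 2 ^ 2)) = Fintype.card ι * (b - a) ^ 2 / 2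
    by ring, div_div_eq_mul_div]
  ring_nf

lemma lintegral_measure_le_measure_add {Ω E : Type*} [MeasurableSpace Ω] [MeasurableSpace E]
    {μ : Measure Ω} [IsProbabilityMeasure μ] {S : Measure E} [IsProbabilityMeasure S]
    {A : Ω → Set E} (hA : MeasurableSet {q : Ω × E | q.2 ∈ A q.1}) {B : Set E}
    (hB : MeasurableSet B) {ε : ENNReal} (h : ∀ p ∉ B, μ {ω | p ∈ A ω} ≤ ε) :
    ∫⁻ ω, S (A ω) ∂μ ≤ S B + ε := by
  calc ∫⁻ ω, S (A ω) ∂μ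
      = ∫⁻ p, μ {ω | p ∈ A ω} ∂S :=
        (Measure.prod_apply hA).symm.trans (Measure.prod_apply_symm hA)
    _ ≤ ∫⁻ p, (B.indicator 1 p + ε) ∂S := by
        refine lintegral_mono fun p => ?_
        by_cases hp : p ∈ B
        · simpa [hp] using le_add_right prob_le_one
        · simpa [hp] using h p hp
    _ = S B + ε := by
        rw [lintegral_add_right _ measurable_const, lintegral_indicator_one hB, lintegral_const,
          measure_univ, mul_one]

lemma mul_mem_Icc_min_max {c z : ℝ} (hz : z ∈ Set.Icc (0 : ℝ) 1) :
    c * z ∈ Set.Icc (min 0 c) (max 0 c) := by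
  rcases le_total 0 c with hc | hc
  · rw [min_eq_left hc, max_eq_right hc]
    exact ⟨by nlinarith [hz.1], by nlinarith [hz.2]⟩
  · rw [min_eq_right hc, max_eq_left hc]
    exact ⟨by nlinarith [hz.2], by nlinarith [hz.1]⟩

lemma natCast_mul_one_div_mul_sum {K : ℕ} (z : Fin K → ℝ) :
    (K : ℝ) * (1 / K * ∑ j, z j) = ∑ j, z j := by
  rcases Nat.eq_zero_or_pos K with rfl | hK
  · simp
  · field_simp

lemma measure_pi_margin_avg_le {ι : Type*} [Fintype ι] [MeasurableSpace ι]
    [MeasurableSingletonClass ι] {α : ι → ℝ} (hα0 : ∀ i, 0 ≤ α i) (hα1 : ∑ i, α i = 1)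
    {z : ι → ℝ} (hz : ∀ i, z i ∈ Set.Icc (0 : ℝ) 1) {K : ℕ} {c τ θ : ℝ} (hc : c ^ 2 ≤ 1)
    (hθ : 0 < θ) (hmargin : θ < c * (∑ i, α i * z i - τ)) :
    (Measure.pi fun _ : Fin K => ∑ i, ENNReal.ofReal (α i) • Measure.dirac i)
        {ω | c * (1 / (K : ℝ) * ∑ j, z (ω j) - τ) ≤ θ / 2} ≤
      ENNReal.ofReal (Real.exp (-(K * θ ^ 2) / 2)) := by
  have := isProbabilityMeasure_sum_smul_dirac hα0 hα1
  set ν : Measure ι := ∑ i, ENNReal.ofReal (α i) • Measure.dirac i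
  set m := ∑ i, α i * z i
  have hc0 : c ≠ 0 := by
    rintro rfl
    linarith
  have hmean : ∫ i, -c * z i ∂ν = -c * m := by
    rw [integral_sum_smul_dirac hα0, Finset.mul_sum]
    exact Finset.sum_congr rfl fun i _ => by ring
  have hevent : {ω : Fin K → ι | c * (1 / (K : ℝ) * ∑ j, z (ω j) - τ) ≤ θ / 2} ⊆
      {ω | K * θ / 2 ≤ ∑ j, (-c * z (ω j) - ∫ i, -c * z i ∂ν)} := by
    intro ω hω
    have hsum : ∑ j, (-c * z (ω j) - -c * m) =
        K * (c * (m - τ)) - K * (c * (1 / (K : ℝ) * ∑ j, z (ω j) - τ)) := by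
      rw [Finset.sum_sub_distrib, ← Finset.mul_sum, Finset.sum_const, Finset.card_univ,
        Fintype.card_fin, nsmul_eq_mul]
      linear_combination c * natCast_mul_one_div_mul_sum fun j => z (ω j)
    have hK : (0 : ℝ) ≤ K := Nat.cast_nonneg K
    rw [Set.mem_ofPred_eq, hmean, hsum]
    nlinarith [mul_le_mul_of_nonneg_left hω hK, mul_le_mul_of_nonneg_left hmargin.le hK]
  have hexponent : -2 * (K * θ / 2) ^ 2 / (K * c ^ 2) ≤ -(K * θ ^ 2) / 2 := by
    rcases (Nat.cast_nonneg (α := ℝ) K).eq_or_lt with hK | hK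
    · simp [← hK]
    · rw [neg_mul, neg_div, neg_div, neg_le_neg_iff, le_div_iff₀ (by positivity)]
      nlinarith [mul_le_mul_of_nonneg_left hc (sq_nonneg (K * θ))]
  have hwidth : (max 0 (-c) - min 0 (-c)) ^ 2 = c ^ 2 := by
    rw [max_sub_min_eq_abs, sq_abs, sub_sq, neg_sq]
    ring
  calc _ ≤ (Measure.pi fun _ : Fin K => ν)
        {ω | K * θ / 2 ≤ ∑ j, (-c * z (ω j) - ∫ i, -c * z i ∂ν)} := measure_mono hevent
    _ = ENNReal.ofReal ((Measure.pi fun _ : Fin K => ν).real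
        {ω | K * θ / 2 ≤ ∑ j, (-c * z (ω j) - ∫ i, -c * z i ∂ν)}) := (ofReal_measureReal).symm
    _ ≤ _ := by
      refine ENNReal.ofReal_le_ofReal ((measureReal_pi_sum_sub_integral_ge_le ν
        (measurable_of_finite _) (fun i => mul_mem_Icc_min_max (hz i)) (by positivity)).trans ?_)
      rw [Fintype.card_fin, hwidth]
      exact Real.exp_le_exp.2 hexponent

theorem adaGNN_margin_empirical_error_step_general
    {X : Type*} [MeasurableSpace X]
    (n K : ℕ)
    (s : Fin n → X → ℝ) (hmeas : ∀ i, Measurable (s i))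
    (hs : ∀ i x, s i x ∈ Set.Icc (0 : ℝ) 1)
    (α : Fin n → ℝ) (hα0 : ∀ i, 0 ≤ α i) (hα1 : ∑ i, α i = 1)
    (f : X → ℝ) (hf : ∀ x, f x = ∑ i, α i * s i x)
    (g : (Fin K → Fin n) → X → ℝ)
    (hg : ∀ ω x, g ω x = (1 / (K : ℝ)) * ∑ j, s (ω j) x)
    (S : Measure (X × Fin 2)) [IsProbabilityMeasure S]
    (τ : ℝ) (hτ : τ ∈ Set.Ioo (0 : ℝ) 1)
    (margin : (X → ℝ) → X × Fin 2 → ℝ)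
    (hmargin : ∀ F p, margin F p = (((p.2 : ℕ) : ℝ) - τ) * (F p.1 - τ))
    (μ : Measure (Fin K → Fin n))
    (hμ : μ = Measure.pi fun _ : Fin K =>
      ∑ i : Fin n, ENNReal.ofReal (α i) • Measure.dirac i)
    (θ : ℝ) (hθ : 0 < θ) :
    (∫⁻ ω, S {p | margin (g ω) p ≤ θ / 2} ∂μ) ≤
      S {p | margin f p ≤ θ} +
        ENNReal.ofReal (Real.exp (-(K * θ ^ 2) / 2)) := by
  have := isProbabilityMeasure_sum_smul_dirac hα0 hα1
  subst hμ
  have hlabel (y : Fin 2) : (((y : ℕ) : ℝ) - τ) ^ 2 ≤ 1 := by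
    have hy : ((y : ℕ) : ℝ) ≤ 1 := by exact_mod_cast Nat.lt_succ_iff.mp y.isLt
    rw [sq_le_one_iff_abs_le_one, abs_le]
    constructor <;> linarith [hτ.1, hτ.2, (y : ℕ).cast_nonneg (α := ℝ)]
  have hmargin_meas {F : X → ℝ} (hF : Measurable F) : Measurable (margin F) := by
    rw [show margin F = _ from funext (hmargin F)]
    exact ((measurable_of_finite fun y : Fin 2 => ((y : ℕ) : ℝ) - τ).comp measurable_snd).mul
      ((hF.comp measurable_fst).sub_const _)
  have hg_meas (ω : Fin K → Fin n) : Measurable (g ω) := by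
    rw [show g ω = _ from funext (hg ω)]
    exact (Finset.measurable_sum _ fun j _ => hmeas (ω j)).const_mul _
  have hf_meas : Measurable f := by
    rw [show f = _ from funext hf]
    exact Finset.measurable_sum _ fun i _ => (hmeas i).const_mul _
  refine lintegral_measure_le_measure_add ?_ (measurableSet_le (hmargin_meas hf_meas)
    measurable_const) ?_
  · exact measurableSet_le (measurable_from_prod_countable_right
      (f := fun q => margin (g q.1) q.2) fun ω => hmargin_meas (hg_meas ω)) measurable_const
  · rintro ⟨x, y⟩ hp
    simp only [Set.mem_ofPred_eq, not_le, hmargin, hf, hg] at hp ⊢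
    exact measure_pi_margin_avg_le hα0 hα1 (hs · x) (hlabel y) hθ hp

/-- Empirical-side step of the margin-based generalization analysis: the expected
`S`-probability that a random `K`-fold average `g_ω` (indices drawn i.i.d. from the
probability mass function `α`) has margin at most `θ/2` is bounded by the
`S`-probability that the convex combination `f` has margin at most `θ`, plus a
Hoeffding concentration term.  Labels take values in `{0,1}` (coded as `Fin 2` with the
discrete σ-algebra) and the margin of `F` at `(x,y)` is `(y - τ) * (F x - τ)`. -/
theorem adaGNN_margin_empirical_error_step
    {X : Type*} [MeasurableSpace X]
    (n K : ℕ) (hn : 1 ≤ n) (hK : 1 ≤ K)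
    (s : Fin n → X → ℝ) (hmeas : ∀ i, Measurable (s i))
    (hs : ∀ i x, s i x ∈ Set.Icc (0 : ℝ) 1)
    (α : Fin n → ℝ) (hα0 : ∀ i, 0 ≤ α i) (hα1 : ∑ i, α i = 1)
    (f : X → ℝ) (hf : ∀ x, f x = ∑ i, α i * s i x)
    (g : (Fin K → Fin n) → X → ℝ)
    (hg : ∀ ω x, g ω x = (1 / (K : ℝ)) * ∑ j, s (ω j) x)
    (S : Measure (X × Fin 2)) [IsProbabilityMeasure S]
    (τ : ℝ) (hτ : τ ∈ Set.Ioo (0 : ℝ) 1)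
    (margin : (X → ℝ) → X × Fin 2 → ℝ)
    (hmargin : ∀ F p, margin F p = (((p.2 : ℕ) : ℝ) - τ) * (F p.1 - τ))
    (μ : Measure (Fin K → Fin n))
    (hμ : μ = Measure.pi fun _ : Fin K =>
      ∑ i : Fin n, ENNReal.ofReal (α i) • Measure.dirac i)
    (θ : ℝ) (hθ : 0 < θ) :
    (∫⁻ ω, S {p | margin (g ω) p ≤ θ / 2} ∂μ) ≤
      S {p | margin f p ≤ θ} +
        ENNReal.ofReal (Real.exp (-(K * θ ^ 2) / 2)) :=
  adaGNN_margin_empirical_error_step_general n K s hmeas hs α hα0 hα1 f hf g hg S τ hτ margin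
    hmargin μ hμ θ hθ
end

section
/- Let m ≥ 1 and T ≥ 1 be natural numbers, let u : Fin T → Fin m → ℝ satisfy u t i ∈ {−1, 1}, and define D, ε, α, Z recursively as in AdaBoost: D 0 i = 1/m, ε t = ∑ i with u t i = −1, D t i with 0 < ε t < 1, α t = (1/2) * ln((1 − ε t)/(ε t)), Z t = ∑ i, D t i * exp(−α t * u t i), and D (t+1) i = D t i * exp(−α t * u t i) / Z t. If there exists γ ∈ (0, 1/2] such that ε t ≤ 1/2 − γ for every t, then the fraction of indices i ∈ Fin m with ∑ t, α t * u t i ≤ 0 is at most exp(−2 * γ² * T). -/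
open Finset Real

/-! Since `1 ≤ exp (-x)` for `x ≤ 0`, the training error is at most the exponential loss
`(1/m) ∑ᵢ exp (-∑ₜ αₜ uₜᵢ)`. Unrolling the reweighting rule turns this loss into
`(∏ₜ Zₜ) ∑ᵢ D_T i = ∏ₜ Zₜ`, and the choice of `αₜ` balances the two halves of `Zₜ`, giving
`Zₜ = 2 √(εₜ (1 - εₜ)) ≤ √(1 - 4γ²) ≤ exp (-2γ²)`. -/

theorem mul_exp_half_log_div {a b : ℝ} (ha : 0 < a) (hb : 0 < b) :
    a * exp (1 / 2 * log (b / a)) = √(a * b) := by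
  have hsqrt : exp (1 / 2 * log (b / a)) = √(b / a) := by
    rw [← exp_log (sqrt_pos.2 (div_pos hb ha)), log_sqrt (div_pos hb ha).le]
    ring_nf
  rw [hsqrt, ← sqrt_sq ha.le, ← sqrt_mul (sq_nonneg a), sqrt_sq ha.le]
  field_simp

theorem sum_mul_apply_of_sign {ι : Type*} (s : Finset ι) (w u : ι → ℝ) (f : ℝ → ℝ)
    (hu : ∀ i ∈ s, u i = -1 ∨ u i = 1) :
    ∑ i ∈ s, w i * f (u i) =
      (∑ i ∈ s with u i = -1, w i) * f (-1) + (∑ i ∈ s with ¬u i = -1, w i) * f 1 := by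
  rw [← sum_filter_add_sum_filter_not s fun i => u i = -1, sum_mul, sum_mul]
  congr 1 <;> refine sum_congr rfl fun i hi => ?_ <;> rw [mem_filter] at hi
  · rw [hi.2]
  · rw [(hu i hi.1).resolve_left hi.2]

theorem sum_mul_exp_adaBoost_eq {ι : Type*} [Fintype ι] (w u : ι → ℝ)
    (hu : ∀ i, u i = -1 ∨ u i = 1) (hw : ∑ i, w i = 1) {ε : ℝ}
    (hε : ε = ∑ i with u i = -1, w i) (hε0 : 0 < ε) (hε1 : ε < 1) :
    ∑ i, w i * exp (-(1 / 2 * log ((1 - ε) / ε)) * u i) = 2 * √(ε * (1 - ε)) := by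
  have hcorrect : ∑ i with ¬u i = -1, w i = 1 - ε := by
    have hsplit := sum_filter_add_sum_filter_not univ (fun i => u i = -1) w
    linarith
  have hneg : -(1 / 2 * log ((1 - ε) / ε)) = 1 / 2 * log (ε / (1 - ε)) := by
    rw [log_div (sub_pos.2 hε1).ne' hε0.ne', log_div hε0.ne' (sub_pos.2 hε1).ne']
    ring
  rw [sum_mul_apply_of_sign univ w u (fun x => exp (-(1 / 2 * log ((1 - ε) / ε)) * x))
    fun i _ => hu i, ← hε, hcorrect, mul_neg_one, neg_neg, mul_one, hneg,
    mul_exp_half_log_div hε0 (sub_pos.2 hε1), mul_exp_half_log_div (sub_pos.2 hε1) hε0,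
    mul_comm (1 - ε)]
  ring

theorem two_sqrt_mul_one_sub_le_exp {ε γ : ℝ} (hγ : 0 ≤ γ) (hε : ε ≤ 1 / 2 - γ) :
    2 * √(ε * (1 - ε)) ≤ exp (-2 * γ ^ 2) := by
  have hsq : exp (-2 * γ ^ 2) ^ 2 = exp (-4 * γ ^ 2) := by
    rw [← exp_nat_mul]; ring_nf
  have hquad : 4 * (ε * (1 - ε)) ≤ 1 - 4 * γ ^ 2 := by nlinarith
  have hexp : 1 - 4 * γ ^ 2 ≤ exp (-4 * γ ^ 2) := by
    linarith [add_one_le_exp (-4 * γ ^ 2)]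
  rw [← le_div_iff₀' two_pos, sqrt_le_iff]
  refine ⟨by positivity, ?_⟩
  rw [div_pow, hsq]
  linarith

theorem mul_prod_eq_mul_prod_of_succ {M : Type*} [CommMonoid M] :
    ∀ {T : ℕ} (D : Fin (T + 1) → M) (Z g : Fin T → M),
      (∀ t, D t.succ * Z t = D t.castSucc * g t) →
        D (Fin.last T) * ∏ t, Z t = D 0 * ∏ t, g t
  | 0, D, Z, g, _ => by simp
  | T + 1, D, Z, g, h => by
    have ih := mul_prod_eq_mul_prod_of_succ (fun t => D t.castSucc) (fun t => Z t.castSucc)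
      (fun t => g t.castSucc) fun t => by simpa only [Fin.succ_castSucc] using h t.castSucc
    have hlast := h (Fin.last T)
    rw [Fin.succ_last] at hlast
    rw [Fin.prod_univ_castSucc, Fin.prod_univ_castSucc]
    calc D (Fin.last (T + 1)) * ((∏ t : Fin T, Z t.castSucc) * Z (Fin.last T))
        = D (Fin.last T).castSucc * (∏ t : Fin T, Z t.castSucc) * g (Fin.last T) := by
          rw [← mul_assoc, mul_right_comm, hlast, mul_right_comm]
      _ = D 0 * ((∏ t : Fin T, g t.castSucc) * g (Fin.last T)) := by
          rw [ih, Fin.castSucc_zero, mul_assoc]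

theorem card_filter_nonpos_le_sum_exp_neg {ι : Type*} [Fintype ι] (F : ι → ℝ) :
    (#{i | F i ≤ 0} : ℝ) ≤ ∑ i, exp (-F i) :=
  calc (#{i | F i ≤ 0} : ℝ) = ∑ i with F i ≤ 0, 1 := by simp
    _ ≤ ∑ i with F i ≤ 0, exp (-F i) :=
      sum_le_sum fun i hi => one_le_exp (neg_nonneg.2 (mem_filter.1 hi).2)
    _ ≤ ∑ i, exp (-F i) := sum_le_sum_of_subset_of_nonneg (filter_subset _ _)
      fun i _ _ => (exp_pos _).le

theorem adaGNN_adaboost_exponential_decay_general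
    (m T : ℕ) (hm : 1 ≤ m)
    (u : Fin T → Fin m → ℝ) (hu : ∀ t i, u t i = -1 ∨ u t i = 1)
    (D : Fin (T + 1) → Fin m → ℝ)
    (ε α Z : Fin T → ℝ)
    (hD0 : ∀ i, D 0 i = 1 / m)
    (hε : ∀ t, ε t = ∑ i ∈ Finset.univ.filter fun i => u t i = -1, D t.castSucc i)
    (hε0 : ∀ t, 0 < ε t) (hε1 : ∀ t, ε t < 1)
    (hα : ∀ t, α t = (1 / 2) * Real.log ((1 - ε t) / ε t))
    (hZ : ∀ t, Z t = ∑ i, D t.castSucc i * Real.exp (-(α t) * u t i))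
    (hD : ∀ t i, D t.succ i = D t.castSucc i * Real.exp (-(α t) * u t i) / Z t)
    (γ : ℝ) (hγ : γ ∈ Set.Ioc (0 : ℝ) (1 / 2)) (hγε : ∀ t, ε t ≤ 1 / 2 - γ) :
    ((Finset.univ.filter fun i : Fin m => (∑ t, α t * u t i) ≤ 0).card : ℝ) / m ≤
      Real.exp (-2 * γ ^ 2 * T) := by
  have hZ_eq (t : Fin T) (hsum : ∑ i, D t.castSucc i = 1) : Z t = 2 * √(ε t * (1 - ε t)) := by
    rw [hZ, hα]
    exact sum_mul_exp_adaBoost_eq _ _ (hu t) hsum (hε t) (hε0 t) (hε1 t)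
  have hZ_pos (t : Fin T) (hsum : ∑ i, D t.castSucc i = 1) : 0 < Z t := by
    have := mul_pos (hε0 t) (sub_pos.2 (hε1 t))
    rw [hZ_eq t hsum]
    positivity
  have hsum (t : Fin (T + 1)) : ∑ i, D t i = 1 := by
    induction t using Fin.induction with
    | zero =>
      simp only [hD0, sum_const, card_univ, Fintype.card_fin, nsmul_eq_mul]
      exact mul_one_div_cancel (Nat.cast_ne_zero.2 (by omega))
    | succ t ih => simp_rw [hD, ← sum_div, ← hZ, div_self (hZ_pos t ih).ne']
  have hunroll (i : Fin m) :
      D (Fin.last T) i * ∏ t, Z t = 1 / m * exp (-∑ t, α t * u t i) := by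
    rw [← hD0, ← sum_neg_distrib, exp_sum]
    refine mul_prod_eq_mul_prod_of_succ (fun t => D t i) Z _ fun t => ?_
    rw [hD, div_mul_cancel₀ _ (hZ_pos t (hsum _)).ne', neg_mul]
  calc ((Finset.univ.filter fun i : Fin m => (∑ t, α t * u t i) ≤ 0).card : ℝ) / m
      ≤ ∑ i, 1 / m * exp (-∑ t, α t * u t i) := by
        rw [← mul_sum, one_div_mul_eq_div]
        exact div_le_div_of_nonneg_right (card_filter_nonpos_le_sum_exp_neg _) m.cast_nonneg
    _ = ∏ t, Z t := by simp_rw [← hunroll, ← sum_mul, hsum, one_mul]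
    _ ≤ ∏ _t : Fin T, exp (-2 * γ ^ 2) := prod_le_prod (fun t _ => (hZ_pos t (hsum _)).le)
        fun t _ => hZ_eq t (hsum _) ▸ two_sqrt_mul_one_sub_le_exp hγ.1.le (hγε t)
    _ = exp (-2 * γ ^ 2 * T) := by
      rw [prod_const, card_univ, Fintype.card_fin, ← exp_nat_mul, mul_comm]

/-- Exponential training-error decay of AdaBoost under the weak-learning assumption:
if every weak learner's weighted error satisfies `ε t ≤ 1/2 - γ` for some
`γ ∈ (0, 1/2]`, then the fraction of training points misclassified by the combined
classifier is at most `exp (-2 * γ² * T)`. -/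
theorem adaGNN_adaboost_exponential_decay
    (m T : ℕ) (hm : 1 ≤ m) (hT : 1 ≤ T)
    (u : Fin T → Fin m → ℝ) (hu : ∀ t i, u t i = -1 ∨ u t i = 1)
    (D : Fin (T + 1) → Fin m → ℝ)
    (ε α Z : Fin T → ℝ)
    (hD0 : ∀ i, D 0 i = 1 / m)
    (hε : ∀ t, ε t = ∑ i ∈ Finset.univ.filter fun i => u t i = -1, D t.castSucc i)
    (hε0 : ∀ t, 0 < ε t) (hε1 : ∀ t, ε t < 1)
    (hα : ∀ t, α t = (1 / 2) * Real.log ((1 - ε t) / ε t))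
    (hZ : ∀ t, Z t = ∑ i, D t.castSucc i * Real.exp (-(α t) * u t i))
    (hD : ∀ t i, D t.succ i = D t.castSucc i * Real.exp (-(α t) * u t i) / Z t)
    (γ : ℝ) (hγ : γ ∈ Set.Ioc (0 : ℝ) (1 / 2)) (hγε : ∀ t, ε t ≤ 1 / 2 - γ) :
    ((Finset.univ.filter fun i : Fin m => (∑ t, α t * u t i) ≤ 0).card : ℝ) / m ≤
      Real.exp (-2 * γ ^ 2 * T) :=
  adaGNN_adaboost_exponential_decay_general m T hm u hu D ε α Z hD0 hε hε0 hε1 hα hZ hD γ hγ hγε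
end
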